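/- When acting on Weyl-group-invariant polynomials of the form f(x₁²,…,x_r²) (f symmetric), the type-C operator D_j x_j - (a/2)∑_{i<j}(σ_{ij}+s_{ij}) equals, in the coordinates y_j = x_j², the operator 2(U_j^A + (ι-1)/2 - 1/2), where U_j^A is the type-A Cherednik operator with parameter a. -/

import Mathlib

open MvPolynomial Finset

noncomputable section

abbrev Pol (r : ℕ) : Type := MvPolynomial (Fin r) ℂ

/-- Multiplication operator by a polynomial. -/
def mulOp {r : ℕ} (p : Pol r) : Module.End ℂ (Pol r) := LinearMap.mulLeft ℂ p

/-- Partial derivative operator. -/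
def pd {r : ℕ} (j : Fin r) : Module.End ℂ (Pol r) := (pderiv j).toLinearMap

/-- The transposition operator `s_{ij}` swapping the variables `i` and `j`. -/
def swOp {r : ℕ} (i j : Fin r) : Module.End ℂ (Pol r) :=
  (rename ⇑(Equiv.swap i j) : Pol r →ₐ[ℂ] Pol r).toLinearMap

/-- The sign change operator `σ_j : x_j ↦ -x_j`. -/
def negOp {r : ℕ} (j : Fin r) : Module.End ℂ (Pol r) :=
  (aeval (fun k : Fin r => if k = j then -(X j) else X k) : Pol r →ₐ[ℂ] Pol r).toLinearMap

/-- The signed transposition operator `σ_{ij} : x_i ↦ -x_j, x_j ↦ -x_i`. -/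
def sswOp {r : ℕ} (i j : Fin r) : Module.End ℂ (Pol r) :=
  (aeval (fun k : Fin r => if k = i then -(X j) else if k = j then -(X i) else X k)
    : Pol r →ₐ[ℂ] Pol r).toLinearMap

/-- Ordered product `f 0 * f 1 * ⋯ * f (r-1)` of operators. -/
def opProd {r : ℕ} (f : Fin r → Module.End ℂ (Pol r)) : Module.End ℂ (Pol r) :=
  ((List.finRange r).map f).prod

/-- The type-C Dunkl operator
`D_j = ∂_j + ((ι-1)/2) x_j⁻¹(1-σ_j) + (a/2) ∑_{i≠j} [(x_j-x_i)⁻¹(1-s_{ij}) + (x_j+x_i)⁻¹(1-σ_{ij})]`,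
with the difference-quotient operators given as data `q0, qs, qσ` pinned down by the
specifications below. -/
def dunklC {r : ℕ} (ι a : ℂ) (q0 : Fin r → Module.End ℂ (Pol r))
    (qs qσ : Fin r → Fin r → Module.End ℂ (Pol r)) (j : Fin r) : Module.End ℂ (Pol r) :=
  pd j + ((ι - 1) / 2) • q0 j + (a / 2) • ∑ i ∈ Finset.univ.erase j, (qs i j + qσ i j)

/-- Specification: `q0 j` is division of `(1 - σ_j) f` by `x_j`. -/
def QuotLong {r : ℕ} (q0 : Fin r → Module.End ℂ (Pol r)) : Prop :=
  ∀ j : Fin r, ∀ f : Pol r, X j * q0 j f = f - negOp j f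

/-- Specification: `qs i j` is division of `(1 - s_{ij}) f` by `x_j - x_i`. -/
def QuotS {r : ℕ} (qs : Fin r → Fin r → Module.End ℂ (Pol r)) : Prop :=
  ∀ i j : Fin r, i ≠ j → ∀ f : Pol r, (X j - X i) * qs i j f = f - swOp i j f

/-- Specification: `qσ i j` is division of `(1 - σ_{ij}) f` by `x_j + x_i`. -/
def QuotSig {r : ℕ} (qσ : Fin r → Fin r → Module.End ℂ (Pol r)) : Prop :=
  ∀ i j : Fin r, i ≠ j → ∀ f : Pol r, (X j + X i) * qσ i j f = f - sswOp i j f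

/-- The type-A Dunkl operator `D_j = ∂_j + (a/2) ∑_{i ≠ j} q i j`, where `q i j` is the
difference-quotient operator `f ↦ (y_j - y_i)⁻¹ (1 - s_{ij}) f` (given as data, pinned down
by the divisibility specification `DunklQuotA`). -/
def dunklA {r : ℕ} (a : ℂ) (q : Fin r → Fin r → Module.End ℂ (Pol r)) (j : Fin r) :
    Module.End ℂ (Pol r) :=
  pd j + (a / 2) • ∑ i ∈ Finset.univ.erase j, q i j

/-- Specification: `q i j` is division of `(1 - s_{ij}) f` by `y_j - y_i`. -/
def DunklQuotA {r : ℕ} (q : Fin r → Fin r → Module.End ℂ (Pol r)) : Prop :=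
  ∀ i j : Fin r, i ≠ j → ∀ f : Pol r,
    (X j - X i) * q i j f = f - swOp i j f

/-- The type-A Cherednik operator `U_j = D_j y_j - (a/2) ∑_{i<j} s_{ij}`. -/
def cherednikA {r : ℕ} (a : ℂ) (q : Fin r → Fin r → Module.End ℂ (Pol r)) (j : Fin r) :
    Module.End ℂ (Pol r) :=
  dunklA a q j * mulOp (X j) - (a / 2) • ∑ i ∈ Finset.univ.filter (fun i => i < j), swOp i j

/-- Substitution of squared variables: `f(y₁,…,y_r) ↦ f(x₁²,…,x_r²)`. -/
def sqVars {r : ℕ} (f : Pol r) : Pol r := aeval (fun k : Fin r => (X k) ^ 2) f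

/-!
Put `g = f(x₁², …, x_r²)`. Since `f` is symmetric, `g` is fixed by `σ_j`, by every `s_{ij}` and
by every `σ_{ij}`, and then each difference quotient applied to `x_j g` is explicit:
`x_j⁻¹(1 - σ_j)(x_j g) = 2g` and `(x_j ∓ x_i)⁻¹(1 - s_{ij} resp. σ_{ij})(x_j g) = g`; likewise
`(y_j - y_i)⁻¹(1 - s_{ij})(y_j f) = f`. Both operators thus reduce to `∂_j ∘ x_j` plus a scalar,
and the chain rule for `y_j = x_j²` gives `∂_{x_j} ∘ x_j = 2 ∂_{y_j} ∘ y_j - 1`.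
-/

variable {r : ℕ}

theorem sqVars_eq_aeval (f : Pol r) : sqVars f = aeval (fun k : Fin r => X k ^ 2) f := rfl

theorem negOp_sqVars (j : Fin r) (f : Pol r) : negOp j (sqVars f) = sqVars f := by
  simp only [negOp, sqVars, AlgHom.toLinearMap_apply, comp_aeval_apply]
  refine congrArg (aeval · f) (funext fun k => ?_)
  by_cases h : k = j <;> simp [h]

theorem swOp_sqVars (i j : Fin r) (f : Pol r) : swOp i j (sqVars f) = sqVars (swOp i j f) := by
  simp only [swOp, sqVars, AlgHom.toLinearMap_apply, comp_aeval_apply, aeval_rename]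
  refine congrArg (aeval · f) (funext fun k => ?_)
  simp

theorem sswOp_sqVars {i j : Fin r} (hij : i ≠ j) (f : Pol r) :
    sswOp i j (sqVars f) = sqVars (swOp i j f) := by
  simp only [sswOp, swOp, sqVars, AlgHom.toLinearMap_apply, comp_aeval_apply, aeval_rename]
  refine congrArg (aeval · f) (funext fun k => ?_)
  rcases eq_or_ne k i with rfl | hki
  · simp
  rcases eq_or_ne k j with rfl | hkj
  · simp [hki]
  · simp [hki, hkj, Equiv.swap_apply_of_ne_of_ne hki hkj]

theorem pderiv_sqVars (j : Fin r) (f : Pol r) :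
    pderiv j (sqVars f) = 2 * X j * sqVars (pderiv j f) := by
  induction f using MvPolynomial.induction_on with
  | C c => simp [sqVars]
  | add p q hp hq => simp only [sqVars_eq_aeval, map_add] at hp hq ⊢; rw [hp, hq]; ring
  | mul_X p k hp =>
    simp only [sqVars_eq_aeval, map_mul, aeval_X, pderiv_mul, map_add] at hp ⊢
    rw [hp]
    rcases eq_or_ne k j with rfl | hkj
    · simp only [Derivation.leibniz_pow, pderiv_X_self, map_one, smul_eq_mul]
      ring
    · simp only [Derivation.leibniz_pow, pderiv_X_of_ne hkj, map_zero, smul_zero]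
      ring

theorem pderiv_X_mul_sqVars (j : Fin r) (f : Pol r) :
    pderiv j (X j * sqVars f) = sqVars ((2 : ℂ) • pderiv j (X j * f) - f) := by
  rw [pderiv_mul, pderiv_sqVars]
  simp only [sqVars_eq_aeval, pderiv_mul, pderiv_X_self, map_sub, map_add, map_mul,
    aeval_X, map_one, smul_eq_C_mul, map_ofNat]
  ring

theorem MvPolynomial.IsSymmetric.swOp_eq {f : Pol r} (hf : f.IsSymmetric) (i j : Fin r) :
    swOp i j f = f :=
  hf (Equiv.swap i j)

theorem negOp_X_mul (j : Fin r) (p : Pol r) : negOp j (X j * p) = -(X j * negOp j p) := by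
  simp [negOp]

theorem swOp_X_mul (i j : Fin r) (p : Pol r) : swOp i j (X j * p) = X i * swOp i j p := by
  simp [swOp]

theorem sswOp_X_mul {i j : Fin r} (hij : i ≠ j) (p : Pol r) :
    sswOp i j (X j * p) = -(X i * sswOp i j p) := by
  simp [sswOp, hij.symm]

theorem X_sub_X_ne_zero {i j : Fin r} (hij : i ≠ j) : (X j - X i : Pol r) ≠ 0 :=
  sub_ne_zero.mpr (X_injective.ne hij.symm)

theorem X_add_X_ne_zero {i j : Fin r} (hij : i ≠ j) : (X j + X i : Pol r) ≠ 0 := by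
  intro h
  simpa [hij] using congrArg (eval fun k => if k = j then (1 : ℂ) else 0) h

theorem QuotLong.apply_X_mul {q0 : Fin r → Module.End ℂ (Pol r)} (hq0 : QuotLong q0)
    {j : Fin r} {g : Pol r} (hg : negOp j g = g) : q0 j (X j * g) = (2 : ℂ) • g :=
  mul_left_cancel₀ (X_ne_zero j) <| by
    rw [hq0, negOp_X_mul, hg, two_smul]; ring

theorem QuotS.apply_X_mul {qs : Fin r → Fin r → Module.End ℂ (Pol r)} (hqs : QuotS qs)
    {i j : Fin r} (hij : i ≠ j) {g : Pol r} (hg : swOp i j g = g) : qs i j (X j * g) = g :=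
  mul_left_cancel₀ (X_sub_X_ne_zero hij) <| by
    rw [hqs i j hij, swOp_X_mul, hg]; ring

theorem QuotSig.apply_X_mul {qσ : Fin r → Fin r → Module.End ℂ (Pol r)} (hqσ : QuotSig qσ)
    {i j : Fin r} (hij : i ≠ j) {g : Pol r} (hg : sswOp i j g = g) : qσ i j (X j * g) = g :=
  mul_left_cancel₀ (X_add_X_ne_zero hij) <| by
    rw [hqσ i j hij, sswOp_X_mul hij, hg]; ring

theorem cherednikC_apply_of_invariant (ι a : ℂ) {q0 : Fin r → Module.End ℂ (Pol r)}
    {qs qσ : Fin r → Fin r → Module.End ℂ (Pol r)}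
    (hq0 : QuotLong q0) (hqs : QuotS qs) (hqσ : QuotSig qσ) (j : Fin r) {g : Pol r}
    (hneg : negOp j g = g) (hsw : ∀ i, i ≠ j → swOp i j g = g)
    (hssw : ∀ i, i ≠ j → sswOp i j g = g) :
    (dunklC ι a q0 qs qσ j * mulOp (X j) -
        (a / 2) • ∑ i ∈ univ.filter (fun i => i < j), (sswOp i j + swOp i j)) g
      = pderiv j (X j * g) +
        (ι - 1 + a * (#(univ.erase j) - #(univ.filter (fun i => i < j)) : ℂ)) • g := by
  have quot : ∑ i ∈ univ.erase j, (qs i j (X j * g) + qσ i j (X j * g)) =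
      #(univ.erase j) • (2 : ℂ) • g := by
    rw [← sum_const, sum_congr rfl]
    intro i hi
    rw [hqs.apply_X_mul (ne_of_mem_erase hi) (hsw i (ne_of_mem_erase hi)),
      hqσ.apply_X_mul (ne_of_mem_erase hi) (hssw i (ne_of_mem_erase hi)), two_smul]
  have swaps : ∑ i ∈ univ.filter (fun i => i < j), (sswOp i j g + swOp i j g) =
      #(univ.filter (fun i => i < j)) • (2 : ℂ) • g := by
    rw [← sum_const, sum_congr rfl]
    intro i hi
    rw [hssw i (mem_filter.mp hi).2.ne, hsw i (mem_filter.mp hi).2.ne, two_smul]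
  simp only [dunklC, mulOp, pd, LinearMap.sub_apply, Module.End.mul_apply, LinearMap.add_apply,
    LinearMap.smul_apply, LinearMap.sum_apply, LinearMap.mulLeft_apply, Derivation.coeFn_coe]
  rw [quot, swaps, hq0.apply_X_mul hneg, ← Nat.cast_smul_eq_nsmul ℂ, ← Nat.cast_smul_eq_nsmul ℂ]
  module

theorem cherednikA_apply_of_invariant (a : ℂ) {q : Fin r → Fin r → Module.End ℂ (Pol r)}
    (hq : DunklQuotA q) (j : Fin r) {f : Pol r} (hsw : ∀ i, i ≠ j → swOp i j f = f) :
    cherednikA a q j f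
      = pderiv j (X j * f) +
        (a / 2 * (#(univ.erase j) - #(univ.filter (fun i => i < j)) : ℂ)) • f := by
  have quot : ∑ i ∈ univ.erase j, q i j (X j * f) = #(univ.erase j) • f := by
    rw [← sum_const, sum_congr rfl]
    intro i hi
    exact QuotS.apply_X_mul hq (ne_of_mem_erase hi) (hsw i (ne_of_mem_erase hi))
  have swaps : ∑ i ∈ univ.filter (fun i => i < j), swOp i j f =
      #(univ.filter (fun i => i < j)) • f := by
    rw [← sum_const, sum_congr rfl]
    intro i hi
    exact hsw i (mem_filter.mp hi).2.ne
  simp only [cherednikA, dunklA, mulOp, pd, LinearMap.sub_apply, Module.End.mul_apply,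
    LinearMap.add_apply, LinearMap.smul_apply, LinearMap.sum_apply, LinearMap.mulLeft_apply,
    Derivation.coeFn_coe]
  rw [quot, swaps, ← Nat.cast_smul_eq_nsmul ℂ, ← Nat.cast_smul_eq_nsmul ℂ]
  module

/-- On even symmetric polynomials `f(x₁²,…,x_r²)`, the type-C operator
`D_j x_j - (a/2)∑_{i<j}(σ_{ij}+s_{ij})` equals `2(U_j^A + (ι-1)/2 - 1/2)` in the
squared variables `y_j = x_j²`, where `U_j^A` is the type-A Cherednik operator with
parameter `a`. -/
theorem cherednikC_on_even {r : ℕ} (ι a : ℂ) (q0 : Fin r → Module.End ℂ (Pol r))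
    (qs qσ qA : Fin r → Fin r → Module.End ℂ (Pol r))
    (hq0 : QuotLong q0) (hqs : QuotS qs) (hqσ : QuotSig qσ) (hqA : DunklQuotA qA)
    (j : Fin r) (f : Pol r) (hf : f.IsSymmetric) :
    (dunklC ι a q0 qs qσ j * mulOp (X j) -
        (a / 2) • ∑ i ∈ Finset.univ.filter (fun i => i < j), (sswOp i j + swOp i j))
      (sqVars f)
      = sqVars ((2 : ℂ) • (cherednikA a qA j f + ((ι - 1) / 2 - 1 / 2) • f)) := by
  have hswap (i : Fin r) : swOp i j f = f := hf.swOp_eq i j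
  rw [cherednikC_apply_of_invariant ι a hq0 hqs hqσ j (negOp_sqVars j f)
      (fun i _ => by rw [swOp_sqVars, hswap]) (fun i hij => by rw [sswOp_sqVars hij, hswap]),
    cherednikA_apply_of_invariant a hqA j (fun i _ => hswap i), pderiv_X_mul_sqVars]
  simp only [sqVars_eq_aeval, map_add, map_sub, map_smul]
  module
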